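/- Let H be a complex Hilbert space, X a compact Hausdorff space, and ι : C(X) → B(H) an injective unital *-homomorphism whose range is contained in ℂ·1 + K(H), the set of operators of the form λ·1 + k with λ ∈ ℂ and k compact. Then there exists a unital *-homomorphism Ψ : ℓ∞(X) → B(H) such that Ψ(f) = ι(f) for every f ∈ C(X), i.e., Ψ composed with the natural inclusion C(X) ⊆ ℓ∞(X) equals ι. -/

import Mathlib

open scoped ENNReal

/-- The canonical inclusion of `C(X)` into `ℓ∞(X)` for a compact Hausdorff space `X`,
sending a continuous function to the corresponding bounded function. -/
noncomputable def inclCLinf {X : Type*} [TopologicalSpace X] [CompactSpace X]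
    (f : C(X, ℂ)) : lp (fun _ : X => ℂ) ∞ :=
  ⟨fun x => f x, memℓp_infty (isCompact_range ((map_continuous f).norm)).bddAbove⟩

/-!
If `1` is not compact, the scalar part `λ f` of `ι f = λ f • 1 + k` is a character of `C(X)`,
hence evaluation at a point `x₀`. Every other point `x` is isolated: otherwise take `f` vanishing
at `x₀` and equal to `1` near `x`, so that `ι f` is compact, and nonzero functions `g n` with
disjoint supports near `x`; the ranges of the `ι (g n)` are mutually orthogonal and fixed by `ι f`,
which is impossible since a compact operator has a finite-dimensional fixed space. (If `1` is
compact, the same argument with `f = 1` shows that `X` is discrete.)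

Once `X \ {x₀}` is discrete, the indicators `δ x` (`x ≠ x₀`) give mutually orthogonal projections
`P x = ι (δ x)`, and `Ψ g = g x₀ • (1 - ∑ P x) + ∑ g x • P x`, with strongly convergent sums, is a
unital `*`-homomorphism on `ℓ∞(X)`. It agrees with `ι` on the `δ x`, which separate the points of
`X`, hence on all of `C(X)` by Stone–Weierstrass.
-/

open scoped InnerProductSpace Topology CStarAlgebra
open Function

section ScalarPart

variable {𝕜 E : Type*} [NontriviallyNormedField 𝕜] [NormedAddCommGroup E] [NormedSpace 𝕜 E]

theorem eq_of_isCompactOperator_sub_smul_one (h1 : ¬IsCompactOperator (1 : E →L[𝕜] E))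
    {T : E →L[𝕜] E} {a b : 𝕜} (ha : IsCompactOperator (T - a • (1 : E →L[𝕜] E)))
    (hb : IsCompactOperator (T - b • (1 : E →L[𝕜] E))) : a = b := by
  by_contra hab
  apply h1
  have h : (1 : E →L[𝕜] E) = (b - a)⁻¹ • ((T - a • 1) - (T - b • 1)) := by
    rw [sub_sub_sub_cancel_left, ← sub_smul, smul_smul,
      inv_mul_cancel₀ (sub_ne_zero.mpr (Ne.symm hab)), one_smul]
  rw [h]
  exact (ha.sub hb).smul _

theorem exists_algHom_isCompactOperator_sub {A : Type*} [Ring A] [Algebra 𝕜 A]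
    (φ : A →ₐ[𝕜] (E →L[𝕜] E)) (h1 : ¬IsCompactOperator (1 : E →L[𝕜] E))
    (hφ : ∀ a, ∃ (c : 𝕜) (k : E →L[𝕜] E), IsCompactOperator k ∧ φ a = c • 1 + k) :
    ∃ χ : A →ₐ[𝕜] 𝕜, ∀ a, IsCompactOperator (φ a - χ a • (1 : E →L[𝕜] E)) := by
  choose c k hk hφk using hφ
  have hc : ∀ a, IsCompactOperator (φ a - c a • (1 : E →L[𝕜] E)) := fun a => by
    rw [hφk a, add_sub_cancel_left]
    exact hk a
  have huniq : ∀ a (d : 𝕜), IsCompactOperator (φ a - d • (1 : E →L[𝕜] E)) → c a = d :=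
    fun a _ hd => eq_of_isCompactOperator_sub_smul_one h1 (hc a) hd
  refine ⟨{ toFun := c, map_one' := ?_, map_mul' := ?_, map_zero' := ?_, map_add' := ?_,
             commutes' := ?_ }, hc⟩
  · refine huniq 1 1 ?_
    rw [map_one, one_smul, sub_self]
    exact isCompactOperator_zero
  · intro a b
    refine huniq _ _ ?_
    have : φ (a * b) - (c a * c b) • 1 = (φ a - c a • 1) * φ b + c a • (φ b - c b • 1) := by
      rw [map_mul, sub_mul, smul_sub, smul_smul, smul_one_mul]; abel
    rw [this]
    exact ((hc a).comp_clm (φ b)).add ((hc b).smul _)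
  · refine huniq 0 0 ?_
    rw [map_zero, zero_smul, sub_self]
    exact isCompactOperator_zero
  · intro a b
    refine huniq _ _ ?_
    rw [map_add, add_smul, add_sub_add_comm]
    exact (hc a).add (hc b)
  · intro r
    refine huniq _ _ ?_
    rw [AlgHom.commutes, Algebra.algebraMap_self, RingHom.id_apply, Algebra.algebraMap_eq_smul_one,
      sub_self]
    exact isCompactOperator_zero

end ScalarPart

theorem IsCompactOperator.finiteDimensional_ker_sub_one {𝕜 E : Type*} [NontriviallyNormedField 𝕜]
    [CompleteSpace 𝕜] [NormedAddCommGroup E] [NormedSpace 𝕜 E] {T : E →L[𝕜] E}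
    (hT : IsCompactOperator T) : FiniteDimensional 𝕜 ((T - 1 : E →L[𝕜] E).ker) := by
  have hfix : ∀ v ∈ (T - 1 : E →L[𝕜] E).ker, T v = v := fun v hv =>
    sub_eq_zero.mp hv
  have hV : ∀ v ∈ (T - 1 : E →L[𝕜] E).ker, (T : E →ₗ[𝕜] E) v ∈ (T - 1 : E →L[𝕜] E).ker :=
    fun v hv => by rwa [ContinuousLinearMap.coe_coe, hfix v hv]
  have hid : ⇑((T : E →ₗ[𝕜] E).restrict hV) = id := funext fun v => Subtype.ext (hfix v v.2)
  exact FiniteDimensional.of_isCompactOperator_id (hid ▸ hT.restrict hV (T - 1).isClosed_ker)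

section Topology

variable {X : Type*} [TopologicalSpace X]

theorem exists_seq_isOpen_pairwise_disjoint [T2Space X] {x : X} (hx : ¬IsOpen ({x} : Set X))
    {U : Set X} (hU : U ∈ 𝓝 x) :
    ∃ W : ℕ → Set X, (∀ n, IsOpen (W n) ∧ (W n).Nonempty ∧ W n ⊆ U) ∧ Pairwise (Disjoint on W) := by
  have step : ∀ V : {V : Set X // V ∈ 𝓝 x}, ∃ (W : Set X) (V' : {V : Set X // V ∈ 𝓝 x}),
      IsOpen W ∧ W.Nonempty ∧ W ⊆ V.1 ∧ V'.1 ⊆ V.1 ∧ Disjoint W V'.1 := by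
    rintro ⟨V, hV⟩
    obtain ⟨z, hzV, hzx⟩ : ∃ z ∈ interior V, z ∉ ({x} : Set X) := Set.not_subset.mp fun h => hx <|
      (Set.Subset.antisymm h (Set.singleton_subset_iff.mpr (mem_interior_iff_mem_nhds.mpr hV))) ▸
        isOpen_interior
    obtain ⟨A, B, hA, hB, hzA, hxB, hAB⟩ := t2_separation hzx
    refine ⟨A ∩ interior V, ⟨B ∩ V, Filter.inter_mem (hB.mem_nhds hxB) hV⟩,
      hA.inter isOpen_interior, ⟨z, hzA, hzV⟩, Set.inter_subset_right.trans interior_subset,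
      Set.inter_subset_right, hAB.mono Set.inter_subset_left Set.inter_subset_left⟩
  choose W next hWo hWne hWV hnext hWnext using step
  let V : ℕ → {V : Set X // V ∈ 𝓝 x} := fun n => next^[n] ⟨U, hU⟩
  have hV_succ : ∀ n, V (n + 1) = next (V n) := fun n => Function.iterate_succ_apply' _ _ _
  have hV_anti : Antitone fun n => (V n).1 :=
    antitone_nat_of_succ_le fun n => by rw [hV_succ]; exact hnext _
  refine ⟨fun n => W (V n), fun n => ⟨hWo _, hWne _, (hWV _).trans (hV_anti (Nat.zero_le n))⟩, ?_⟩
  refine (pairwise_disjoint_on _).mpr fun m n hmn => ?_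
  refine (hWnext (V m)).mono_right ((hWV _).trans ?_)
  rw [← hV_succ]
  exact hV_anti hmn

theorem exists_continuousMap_ne_zero_support_subset [NormalSpace X] [T1Space X] {W : Set X}
    (hW : IsOpen W) (hne : W.Nonempty) : ∃ g : C(X, ℂ), g ≠ 0 ∧ support g ⊆ W := by
  obtain ⟨z, hz⟩ := hne
  obtain ⟨f, hf0, hf1, -⟩ := exists_continuous_zero_one_of_isClosed hW.isClosed_compl
    isClosed_singleton (Set.disjoint_singleton_right.mpr (not_not.mpr hz))
  refine ⟨⟨fun y => (f y : ℂ), by fun_prop⟩, fun h => ?_, fun y hy => ?_⟩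
  · have := congrArg (fun g : C(X, ℂ) => g z) h
    simp [hf1 rfl] at this
  · by_contra hyW
    exact hy (by simp [hf0 hyW])

theorem exists_seq_continuousMap_disjoint_support [T2Space X] [NormalSpace X] {x : X}
    (hx : ¬IsOpen ({x} : Set X)) {U : Set X} (hU : U ∈ 𝓝 x) :
    ∃ g : ℕ → C(X, ℂ), (∀ n, g n ≠ 0 ∧ support (g n) ⊆ U) ∧
      Pairwise (Disjoint on fun n => support (g n)) := by
  obtain ⟨W, hW, hWdisj⟩ := exists_seq_isOpen_pairwise_disjoint hx hU
  choose g hg0 hgW using fun n => exists_continuousMap_ne_zero_support_subset (hW n).1 (hW n).2.1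
  exact ⟨g, fun n => ⟨hg0 n, (hgW n).trans (hW n).2.2⟩,
    fun m n hmn => (hWdisj hmn).mono (hgW m) (hgW n)⟩

theorem exists_continuousMap_eq_zero_eqOn_one [NormalSpace X] [T1Space X] {x₀ x : X} (hx : x ≠ x₀) :
    ∃ f : C(X, ℂ), f x₀ = 0 ∧ ∃ U ∈ 𝓝 x, Set.EqOn f 1 U := by
  obtain ⟨K, hK, hKc, hKx₀⟩ := exists_mem_nhds_isClosed_subset (isOpen_compl_singleton.mem_nhds hx)
  obtain ⟨f, hf0, hf1, -⟩ := exists_continuous_zero_one_of_isClosed isClosed_singleton hKc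
    (Set.disjoint_singleton_left.mpr fun h => hKx₀ h rfl)
  exact ⟨⟨fun y => (f y : ℂ), by fun_prop⟩, by simp [hf0 rfl], K, hK, fun y hy => by simp [hf1 hy]⟩

end Topology

theorem isOpen_singleton_of_isCompactOperator {X H : Type*} [TopologicalSpace X] [T2Space X]
    [NormalSpace X] [NormedAddCommGroup H] [InnerProductSpace ℂ H] [CompleteSpace H]
    (φ : C(X, ℂ) →⋆ₐ[ℂ] (H →L[ℂ] H)) (hφ : Injective φ) {f : C(X, ℂ)}
    (hf : IsCompactOperator (φ f)) {x : X} {U : Set X} (hU : U ∈ 𝓝 x) (hfU : Set.EqOn f 1 U) :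
    IsOpen ({x} : Set X) := by
  by_contra hx
  obtain ⟨g, hg, hgdisj⟩ := exists_seq_continuousMap_disjoint_support hx hU
  have hfg : ∀ n, f * g n = g n := fun n => ContinuousMap.ext fun y => by
    by_cases hy : y ∈ support (g n)
    · simp [hfU ((hg n).2 hy)]
    · simp [notMem_support.mp hy]
  have hgg : Pairwise fun m n => star (g m) * g n = 0 := fun m n hmn =>
    ContinuousMap.ext fun y => by
      by_cases hy : g m y = 0
      · simp [hy]
      · simp [notMem_support.mp (Set.disjoint_left.mp (hgdisj hmn) hy)]
  choose ξ hξ using fun n => DFunLike.ne_iff.mp ((map_ne_zero_iff φ hφ).mpr (hg n).1)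
  have hmem : ∀ n, φ (g n) (ξ n) ∈ (φ f - 1 : H →L[ℂ] H).ker := fun n => by
    simp [← mul_apply_eq_comp, ← map_mul, hfg]
  have := hf.finiteDimensional_ker_sub_one
  refine Module.Finite.not_linearIndependent_of_infinite (R := ℂ) (fun n => (⟨_, hmem n⟩ :
    (φ f - 1 : H →L[ℂ] H).ker)) (linearIndependent_of_ne_zero_of_inner_eq_zero
      (fun n h => hξ n (congrArg Subtype.val h)) fun m n hmn => ?_)
  change ⟪φ (g m) (ξ m), φ (g n) (ξ n)⟫_ℂ = 0
  rw [← ContinuousLinearMap.adjoint_inner_right, ← ContinuousLinearMap.star_eq_adjoint, ← map_star,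
    ← mul_apply_eq_comp, ← map_mul, hgg hmn, map_zero, zero_apply, inner_zero_right]

theorem exists_forall_ne_isOpen_singleton {H : Type*} [NormedAddCommGroup H]
    [InnerProductSpace ℂ H] [CompleteSpace H] {X : Type*} [TopologicalSpace X] [CompactSpace X]
    [T2Space X] [Nonempty X] (ι : C(X, ℂ) →⋆ₐ[ℂ] (H →L[ℂ] H)) (hinj : Injective ι)
    (hrange : ∀ f : C(X, ℂ), ∃ (lam : ℂ) (k : H →L[ℂ] H),
      IsCompactOperator k ∧ ι f = lam • (1 : H →L[ℂ] H) + k) :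
    ∃ x₀ : X, ∀ x ≠ x₀, IsOpen ({x} : Set X) := by
  by_cases h1 : IsCompactOperator (1 : H →L[ℂ] H)
  · exact ⟨Classical.arbitrary X, fun x _ => isOpen_singleton_of_isCompactOperator ι hinj
      (f := 1) (by rwa [map_one]) Filter.univ_mem fun _ _ => rfl⟩
  obtain ⟨χ, hχ⟩ := exists_algHom_isCompactOperator_sub ι.toAlgHom h1 hrange
  obtain ⟨x₀, hx₀⟩ := (WeakDual.CharacterSpace.continuousMapEval_bijective X ℂ).2
    (WeakDual.CharacterSpace.equivAlgHom.symm χ)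
  refine ⟨x₀, fun x hx => ?_⟩
  obtain ⟨f, hf, U, hU, hfU⟩ := exists_continuousMap_eq_zero_eqOn_one hx
  have hχf : χ f = 0 := by rw [← hf]; exact (DFunLike.congr_fun hx₀ f).symm
  exact isOpen_singleton_of_isCompactOperator ι hinj (by simpa [hχf] using hχ f) hU hfU

theorem IsStarProjection.sum {R ι : Type*} [NonUnitalSemiring R] [StarRing R] {p : ι → R}
    (hp : ∀ i, IsStarProjection (p i)) (hpp : Pairwise fun i j => p i * p j = 0) (s : Finset ι) :
    IsStarProjection (∑ i ∈ s, p i) := by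
  classical
  induction s using Finset.induction_on with
  | empty => simp [IsStarProjection.zero]
  | insert j s hj ih =>
    rw [Finset.sum_insert hj]
    refine (hp j).add ih ?_
    rw [Finset.mul_sum]
    exact Finset.sum_eq_zero fun i hi => hpp (ne_of_mem_of_not_mem hi hj).symm

theorem IsStarProjection.norm_apply_le {H : Type*} [NormedAddCommGroup H] [InnerProductSpace ℂ H]
    [CompleteSpace H] {p : H →L[ℂ] H} (hp : IsStarProjection p) (ξ : H) : ‖p ξ‖ ≤ ‖ξ‖ := by
  obtain ⟨K, _, rfl⟩ := isStarProjection_iff_eq_starProjection.mp hp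
  exact K.norm_starProjection_apply_le ξ

structure OrthogonalProjections (ι H : Type*) [NormedAddCommGroup H] [InnerProductSpace ℂ H]
    [CompleteSpace H] where
  proj : ι → H →L[ℂ] H
  isStarProjection : ∀ i, IsStarProjection (proj i)
  mul_eq_zero : Pairwise fun i j => proj i * proj j = 0

namespace OrthogonalProjections

variable {ι H : Type*} [NormedAddCommGroup H] [InnerProductSpace ℂ H] [CompleteSpace H]
  (P : OrthogonalProjections ι H)

theorem inner_proj_left (i : ι) (ξ η : H) : ⟪P.proj i ξ, η⟫_ℂ = ⟪ξ, P.proj i η⟫_ℂ := by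
  rw [← ContinuousLinearMap.adjoint_inner_right, ← ContinuousLinearMap.star_eq_adjoint,
    (P.isStarProjection i).isSelfAdjoint.star_eq]

theorem inner_proj_proj {i j : ι} (hij : i ≠ j) (ξ η : H) : ⟪P.proj i ξ, P.proj j η⟫_ℂ = 0 := by
  rw [inner_proj_left, ← mul_apply_eq_comp, P.mul_eq_zero hij, zero_apply, inner_zero_right]

abbrev range (i : ι) : Submodule ℂ H := LinearMap.range (P.proj i : H →ₗ[ℂ] H)

theorem orthogonalFamily :
    OrthogonalFamily ℂ (fun i => P.range i) fun i => (P.range i).subtypeₗᵢ := by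
  rintro i j hij ⟨_, ξ, rfl⟩ ⟨_, η, rfl⟩
  exact P.inner_proj_proj hij ξ η

theorem norm_sum_smul_sq (c : ι → ℂ) (ξ : H) (s : Finset ι) :
    ‖∑ i ∈ s, c i • P.proj i ξ‖ ^ 2 = ∑ i ∈ s, ‖c i • P.proj i ξ‖ ^ 2 :=
  P.orthogonalFamily.norm_sum (fun i => ⟨c i • P.proj i ξ, c i • ξ, map_smul _ _ _⟩) s

theorem sum_norm_sq_le (ξ : H) (s : Finset ι) : ∑ i ∈ s, ‖P.proj i ξ‖ ^ 2 ≤ ‖ξ‖ ^ 2 := by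
  have h := P.norm_sum_smul_sq 1 ξ s
  simp only [Pi.one_apply, one_smul, ← sum_apply] at h
  rw [← h]
  gcongr
  exact (IsStarProjection.sum P.isStarProjection P.mul_eq_zero s).norm_apply_le ξ

theorem sum_norm_smul_sq_le (c : lp (fun _ : ι => ℂ) ∞) (ξ : H) (s : Finset ι) :
    ∑ i ∈ s, ‖c i • P.proj i ξ‖ ^ 2 ≤ (‖c‖ * ‖ξ‖) ^ 2 := by
  calc ∑ i ∈ s, ‖c i • P.proj i ξ‖ ^ 2 ≤ ∑ i ∈ s, ‖c‖ ^ 2 * ‖P.proj i ξ‖ ^ 2 := by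
        gcongr with i
        rw [norm_smul, mul_pow]
        gcongr
        exact lp.norm_apply_le_norm ENNReal.top_ne_zero c i
    _ ≤ (‖c‖ * ‖ξ‖) ^ 2 := by
        rw [← Finset.mul_sum, mul_pow]
        gcongr
        exact P.sum_norm_sq_le ξ s

theorem summable_smul (c : lp (fun _ : ι => ℂ) ∞) (ξ : H) :
    Summable fun i => c i • P.proj i ξ :=
  (P.orthogonalFamily.summable_iff_norm_sq_summable
    (fun i => ⟨c i • P.proj i ξ, c i • ξ, map_smul _ _ _⟩)).mpr
    (summable_of_sum_le (fun _ => sq_nonneg _) (P.sum_norm_smul_sq_le c ξ))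

theorem norm_tsum_smul_le (c : lp (fun _ : ι => ℂ) ∞) (ξ : H) :
    ‖∑' i, c i • P.proj i ξ‖ ≤ ‖c‖ * ‖ξ‖ := by
  refine le_of_tendsto' (P.summable_smul c ξ).hasSum.norm fun s => ?_
  refine le_of_pow_le_pow_left₀ two_ne_zero (by positivity) ?_
  rw [P.norm_sum_smul_sq]
  exact P.sum_norm_smul_sq_le c ξ s

theorem proj_tsum_smul (c : lp (fun _ : ι => ℂ) ∞) (ξ : H) (j : ι) :
    P.proj j (∑' i, c i • P.proj i ξ) = c j • P.proj j ξ := by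
  rw [(P.proj j).map_tsum (P.summable_smul c ξ), tsum_eq_single j]
  · rw [map_smul, ← mul_apply_eq_comp, (P.isStarProjection j).isIdempotentElem.eq]
  · intro i hij
    rw [map_smul, ← mul_apply_eq_comp, P.mul_eq_zero hij.symm, zero_apply, smul_zero]

noncomputable def sumCLM (c : lp (fun _ : ι => ℂ) ∞) : H →L[ℂ] H :=
  LinearMap.mkContinuous
    { toFun ξ := ∑' i, c i • P.proj i ξ
      map_add' ξ η := by
        simp only [map_add, smul_add]
        exact (P.summable_smul c ξ).tsum_add (P.summable_smul c η)
      map_smul' a ξ := by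
        simp only [map_smul, smul_comm (c _) a, RingHom.id_apply]
        exact (P.summable_smul c ξ).tsum_const_smul a }
    ‖c‖ (P.norm_tsum_smul_le c)

theorem sumCLM_apply (c : lp (fun _ : ι => ℂ) ∞) (ξ : H) :
    P.sumCLM c ξ = ∑' i, c i • P.proj i ξ :=
  rfl

noncomputable def sumHom : lp (fun _ : ι => ℂ) ∞ →⋆ₙₐ[ℂ] (H →L[ℂ] H) where
  toFun := P.sumCLM
  map_smul' a c := by
    ext ξ
    simp only [sumCLM_apply, lp.coeFn_smul, Pi.smul_apply, smul_eq_mul, mul_smul, smul_apply]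
    exact (P.summable_smul c ξ).tsum_const_smul a
  map_zero' := by
    ext ξ
    simp [sumCLM_apply]
  map_add' c d := by
    ext ξ
    simp only [sumCLM_apply, lp.coeFn_add, Pi.add_apply, add_smul, add_apply]
    exact (P.summable_smul c ξ).tsum_add (P.summable_smul d ξ)
  map_mul' c d := by
    ext ξ
    simp only [sumCLM_apply, mul_apply_eq_comp, P.proj_tsum_smul, lp.infty_coeFn_mul,
      Pi.mul_apply, mul_smul]
  map_star' c := by
    rw [ContinuousLinearMap.star_eq_adjoint, ContinuousLinearMap.eq_adjoint_iff]
    intro ξ η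
    have hleft := (innerSLFlip ℂ η).map_tsum (P.summable_smul (star c) ξ)
    have hright := (innerSL ℂ ξ).map_tsum (P.summable_smul c η)
    simp only [innerSLFlip_apply_apply, innerSL_apply_apply] at hleft hright
    rw [sumCLM_apply, sumCLM_apply, hleft, hright]
    refine tsum_congr fun i => ?_
    rw [inner_smul_left, inner_smul_right, lp.coeFn_star, Pi.star_apply, Complex.star_def,
      Complex.conj_conj, inner_proj_left]

theorem sumHom_apply (c : lp (fun _ : ι => ℂ) ∞) (ξ : H) :
    P.sumHom c ξ = ∑' i, c i • P.proj i ξ :=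
  rfl

theorem sumHom_single [DecidableEq ι] (j : ι) : P.sumHom (lp.single ∞ j 1) = P.proj j := by
  ext ξ
  rw [sumHom_apply, tsum_eq_single j fun i hij => by simp [lp.single_apply, hij]]
  simp [lp.single_apply]

end OrthogonalProjections

namespace NonUnitalStarAlgHom

variable {R A B : Type*} [CommRing R] [StarRing R] [Ring A] [Algebra R A] [StarRing A]
  [Ring B] [Algebra R B] [StarRing B] [StarModule R B]

/-- `1 - φ 1` is a projection annihilating the range of `φ` from both sides, which makes this
multiplicative. -/
def unitalizeWith (χ : A →⋆ₐ[R] R) (φ : A →⋆ₙₐ[R] B) : A →⋆ₐ[R] B where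
  toFun a := χ a • (1 - φ 1) + φ a
  map_one' := by simp
  map_mul' a b := by
    have hl : ∀ b, (1 - φ 1) * φ b = 0 := fun b => by
      rw [sub_mul, ← map_mul, one_mul, one_mul, sub_self]
    have hr : ∀ a, φ a * (1 - φ 1) = 0 := fun a => by
      rw [mul_sub, ← map_mul, mul_one, mul_one, sub_self]
    have hqq : (1 - φ 1) * (1 - φ 1) = 1 - φ 1 := by rw [sub_mul, one_mul, hr, sub_zero]
    simp only [map_mul, add_mul, mul_add, hqq, smul_mul_assoc, mul_smul_comm, hl, hr, smul_zero,
      zero_add, add_zero, smul_smul, mul_comm (χ b)]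
  map_zero' := by simp
  map_add' a b := by simp only [map_add, add_smul]; abel
  commutes' r := by
    rw [AlgHomClass.commutes, Algebra.algebraMap_self, RingHom.id_apply,
      Algebra.algebraMap_eq_smul_one, map_smul, ← smul_add, sub_add_cancel,
      Algebra.algebraMap_eq_smul_one]
  map_star' a := by
    have h1 : star (φ 1) = φ 1 := by rw [← map_star, star_one]
    simp only [map_star, star_add, star_smul, star_sub, star_one, h1]

theorem unitalizeWith_apply (χ : A →⋆ₐ[R] R) (φ : A →⋆ₙₐ[R] B) (a : A) :
    φ.unitalizeWith χ a = χ a • (1 - φ 1) + φ a :=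
  rfl

end NonUnitalStarAlgHom

namespace lp

variable (𝕜 : Type*) {X ι : Type*} [RCLike 𝕜]

def compStarAlgHom (σ : ι → X) : lp (fun _ : X => 𝕜) ∞ →⋆ₐ[𝕜] lp (fun _ : ι => 𝕜) ∞ where
  toFun g := ⟨fun i => g (σ i), memℓp_infty ⟨‖g‖, by
    rintro _ ⟨i, rfl⟩
    exact lp.norm_apply_le_norm ENNReal.top_ne_zero g (σ i)⟩⟩
  map_one' := rfl
  map_mul' _ _ := rfl
  map_zero' := rfl
  map_add' _ _ := rfl
  commutes' _ := rfl
  map_star' _ := rfl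

@[simp]
theorem compStarAlgHom_apply (σ : ι → X) (g : lp (fun _ : X => 𝕜) ∞) (i : ι) :
    compStarAlgHom 𝕜 σ g i = g (σ i) :=
  rfl

def evalStarAlgHom (x : X) : lp (fun _ : X => 𝕜) ∞ →⋆ₐ[𝕜] 𝕜 where
  toFun g := g x
  map_one' := rfl
  map_mul' _ _ := rfl
  map_zero' := rfl
  map_add' _ _ := rfl
  commutes' _ := rfl
  map_star' _ := rfl

@[simp]
theorem evalStarAlgHom_apply (x : X) (g : lp (fun _ : X => 𝕜) ∞) : evalStarAlgHom 𝕜 x g = g x :=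
  rfl

end lp

noncomputable def inclStarAlgHom (X : Type*) [TopologicalSpace X] [CompactSpace X] :
    C(X, ℂ) →⋆ₐ[ℂ] lp (fun _ : X => ℂ) ∞ where
  toFun := inclCLinf
  map_one' := rfl
  map_mul' _ _ := rfl
  map_zero' := rfl
  map_add' _ _ := rfl
  commutes' _ := rfl
  map_star' _ := rfl

theorem inclStarAlgHom_apply {X : Type*} [TopologicalSpace X] [CompactSpace X] (f : C(X, ℂ))
    (x : X) : inclStarAlgHom X f x = f x :=
  rfl

theorem ContinuousMap.starAlgHom_ext_of_separatesPoints {X A : Type*} [TopologicalSpace X]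
    [CompactSpace X] [CStarAlgebra A] {φ ψ : C(X, ℂ) →⋆ₐ[ℂ] A} {s : Set C(X, ℂ)}
    (hs : ∀ x y, x ≠ y → ∃ f ∈ s, f x ≠ f y) (h : s.EqOn φ ψ) : φ = ψ := by
  have hdense := ContinuousMap.starSubalgebra_topologicalClosure_eq_top_of_separatesPoints
    (StarAlgebra.adjoin ℂ s) fun x y hxy => by
      obtain ⟨f, hf, hfxy⟩ := hs x y hxy
      exact ⟨f, ⟨f, StarAlgebra.subset_adjoin ℂ s hf, rfl⟩, hfxy⟩
  have hle : (StarAlgebra.adjoin ℂ s).topologicalClosure ≤ StarAlgHom.equalizer φ ψ :=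
    StarSubalgebra.topologicalClosure_minimal (StarAlgHom.adjoin_le_equalizer φ ψ h)
      (isClosed_eq (map_continuous φ) (map_continuous ψ))
  exact StarAlgHom.ext fun f => hle (hdense ▸ StarSubalgebra.mem_top)

section Construction

variable {X : Type*} [TopologicalSpace X]

noncomputable def clopenIndicator (s : Set X) (hs : IsClopen s) : C(X, ℂ) :=
  ⟨s.indicator 1, hs.continuous_indicator continuous_const⟩

theorem coe_clopenIndicator (s : Set X) (hs : IsClopen s) :
    ⇑(clopenIndicator s hs) = s.indicator 1 :=
  rfl

theorem isStarProjection_clopenIndicator (s : Set X) (hs : IsClopen s) :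
    IsStarProjection (clopenIndicator s hs) := by
  refine ⟨ContinuousMap.ext fun x => ?_, ContinuousMap.ext fun x => ?_⟩ <;>
    by_cases hx : x ∈ s <;> simp [coe_clopenIndicator, hx]

theorem clopenIndicator_mul_of_disjoint {s t : Set X} (hs : IsClopen s) (ht : IsClopen t)
    (hst : Disjoint s t) : clopenIndicator s hs * clopenIndicator t ht = 0 :=
  ContinuousMap.ext fun x => by
    by_cases hx : x ∈ s
    · simp [coe_clopenIndicator, hx, Set.disjoint_left.mp hst hx]
    · simp [coe_clopenIndicator, hx]

theorem exists_starAlgHom_lp_comp_eq_of_isOpen_singleton [CompactSpace X] [T2Space X] {H : Type*}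
    [NormedAddCommGroup H] [InnerProductSpace ℂ H] [CompleteSpace H]
    (φ : C(X, ℂ) →⋆ₐ[ℂ] (H →L[ℂ] H)) (x₀ : X) (hiso : ∀ x ≠ x₀, IsOpen ({x} : Set X)) :
    ∃ Ψ : lp (fun _ : X => ℂ) ∞ →⋆ₐ[ℂ] (H →L[ℂ] H), Ψ.comp (inclStarAlgHom X) = φ := by
  classical
  let δ : {x // x ≠ x₀} → C(X, ℂ) := fun x =>
    clopenIndicator {x.1} ⟨isClosed_singleton, hiso x.1 x.2⟩
  have hδ : ∀ x, ⇑(δ x) = Set.indicator {x.1} 1 := fun _ => rfl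
  let P : OrthogonalProjections {x // x ≠ x₀} H :=
    { proj := fun x => φ (δ x)
      isStarProjection := fun x => (isStarProjection_clopenIndicator _ _).map φ
      mul_eq_zero := fun x y hxy => by
        change φ (δ x) * φ (δ y) = 0
        rw [← map_mul, show δ x * δ y = 0 from clopenIndicator_mul_of_disjoint _ _
          (Set.disjoint_singleton.mpr (Subtype.coe_injective.ne hxy)), map_zero] }
  refine ⟨(P.sumHom.comp (lp.compStarAlgHom ℂ Subtype.val).toNonUnitalStarAlgHom).unitalizeWith
    (lp.evalStarAlgHom ℂ x₀), ContinuousMap.starAlgHom_ext_of_separatesPoints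
      (s := Set.range δ) (fun x y hxy => ?_) ?_⟩
  · by_cases hx : x = x₀
    · refine ⟨δ ⟨y, hx ▸ hxy.symm⟩, ⟨_, rfl⟩, ?_⟩
      simp [hδ, hxy]
    · refine ⟨δ ⟨x, hx⟩, ⟨_, rfl⟩, ?_⟩
      simp [hδ, hxy.symm]
  · rintro _ ⟨x, rfl⟩
    have hx₀ : lp.evalStarAlgHom ℂ x₀ (inclStarAlgHom X (δ x)) = 0 := by
      simp [hδ, inclStarAlgHom_apply, Ne.symm x.2]
    have hres : lp.compStarAlgHom ℂ Subtype.val (inclStarAlgHom X (δ x)) = lp.single ∞ x 1 := by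
      ext y
      simp [hδ, inclStarAlgHom_apply, lp.single_apply, Pi.single_apply, Subtype.ext_iff]
    simp [NonUnitalStarAlgHom.unitalizeWith_apply, hx₀, hres, P.sumHom_single, P]

end Construction

theorem exists_starAlgHom_lp_comp_eq_of_isEmpty {X A : Type*} [TopologicalSpace X] [CompactSpace X]
    [IsEmpty X] [Semiring A] [Algebra ℂ A] [StarRing A] (φ : C(X, ℂ) →⋆ₐ[ℂ] A) :
    ∃ Ψ : lp (fun _ : X => ℂ) ∞ →⋆ₐ[ℂ] A, Ψ.comp (inclStarAlgHom X) = φ := by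
  have : Subsingleton A := subsingleton_of_zero_eq_one <| by
    rw [← map_zero φ, ← map_one φ, Subsingleton.elim (0 : C(X, ℂ)) 1]
  exact ⟨{ toFun := 0
           map_one' := Subsingleton.elim _ _
           map_mul' := fun _ _ => Subsingleton.elim _ _
           map_zero' := rfl
           map_add' := fun _ _ => Subsingleton.elim _ _
           commutes' := fun _ => Subsingleton.elim _ _
           map_star' := fun _ => Subsingleton.elim _ _ },
    StarAlgHom.ext fun _ => Subsingleton.elim _ _⟩

/-- **Theorem (the inclusion `ℂ·1 + K(H) ⊆ B(H)` is a W*-discretization).**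
If `ι : C(X) → B(H)` is an injective unital `*`-homomorphism whose range consists of
operators of the form `λ·1 + k` with `k` compact, then `ι` extends to a unital
`*`-homomorphism `Ψ : ℓ∞(X) → B(H)` along the natural inclusion `C(X) ⊆ ℓ∞(X)`. -/
theorem stmt12 {H : Type*} [NormedAddCommGroup H] [InnerProductSpace ℂ H] [CompleteSpace H]
    {X : Type*} [TopologicalSpace X] [CompactSpace X] [T2Space X]
    (ι : C(X, ℂ) →⋆ₐ[ℂ] (H →L[ℂ] H))
    (hinj : Function.Injective ι)
    (hrange : ∀ f : C(X, ℂ), ∃ (lam : ℂ) (k : H →L[ℂ] H),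
      IsCompactOperator k ∧ ι f = lam • (1 : H →L[ℂ] H) + k) :
    ∃ Ψ : lp (fun _ : X => ℂ) ∞ →⋆ₐ[ℂ] (H →L[ℂ] H),
      ∀ f : C(X, ℂ), Ψ (inclCLinf f) = ι f := by
  suffices ∃ Ψ : lp (fun _ : X => ℂ) ∞ →⋆ₐ[ℂ] (H →L[ℂ] H), Ψ.comp (inclStarAlgHom X) = ι by
    obtain ⟨Ψ, hΨ⟩ := this
    exact ⟨Ψ, fun f => DFunLike.congr_fun hΨ f⟩
  rcases isEmpty_or_nonempty X with _ | _
  · exact exists_starAlgHom_lp_comp_eq_of_isEmpty ι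
  obtain ⟨x₀, hiso⟩ := exists_forall_ne_isOpen_singleton ι hinj hrange
  exact exists_starAlgHom_lp_comp_eq_of_isOpen_singleton ι x₀ hiso
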